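/- arXiv:1102.0842 — 2 statements merged into one kernel-verified Lean document; each statement's English description precedes it below -/
import Mathlib

section
/- With w_γ as above (the normalized infinite product with ∫ w_γ = 1 and γ/(2π) < c_γ < γ/π, γ/7 < a_1 < γ/2), for every t ≥ e^{1/√2}/γ one has 0 ≤ w_γ(t) ≤ 2(eγ)² t · exp(−(2/7)·γt/(ln(γt))²). -/
/-!
Every factor `sinc²` lies in `[0, 1]`, so `w_γ(t) ≤ c_γ ∏_{n ≤ k} sinc²(a_n t)` for every `k`.
Put `x = γt` and `ν = x / (7 log² x)`, so that the exponent in the bound is `2ν`. Since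
`a_1 t > x/7` and `log n ≤ log x` for `n ≤ ν`, one has `a_n t ≥ ν / n` for `1 ≤ n ≤ ν`; with
`sinc² u ≤ u⁻²` and `k = ⌊ν⌋` the partial product is at most `(k! / ν^k)²`, and Stirling's bound
`k! ≤ e √k (k/e)^k` turns this into `e⁴ ν e^{-2ν}`. When `ν < 1` the empty product suffices.
-/

open Real

noncomputable def sinc (x : ℝ) : ℝ := if x = 0 then 1 else Real.sin x / x

open Finset
open scoped Nat

theorem sinc_eq_real_sinc : _root_.sinc = Real.sinc := rfl

theorem sinc_sq_le_one (u : ℝ) : _root_.sinc u ^ 2 ≤ 1 :=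
  (sq_le_one_iff_abs_le_one _).2 (Real.abs_sinc_le_one u)

theorem sinc_sq_le_inv_sq {u : ℝ} (hu : u ≠ 0) : _root_.sinc u ^ 2 ≤ (u ^ 2)⁻¹ := by
  rw [sinc_eq_real_sinc, Real.sinc_of_ne_zero hu, div_pow, div_eq_mul_inv]
  exact mul_le_of_le_one_left (by positivity) (sin_sq_le_one u)

theorem one_sub_sinc_sq_le_self {u : ℝ} (hu : 0 ≤ u) : 1 - _root_.sinc u ^ 2 ≤ u := by
  rcases hu.eq_or_lt with rfl | hu
  · simp [sinc_eq_real_sinc]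
  rcases le_or_gt u 1 with hu1 | hu1
  · have hlow : 1 - u ^ 2 / 6 ≤ _root_.sinc u := by
      rw [sinc_eq_real_sinc, Real.sinc_of_ne_zero hu.ne', le_div_iff₀ hu]
      linarith [sin_gt_sub_cube hu]
    have hup : _root_.sinc u ≤ 1 := Real.sinc_le_one u
    calc 1 - _root_.sinc u ^ 2 = (1 - _root_.sinc u) * (1 + _root_.sinc u) := by ring
      _ ≤ u ^ 2 / 6 * 2 := by gcongr <;> nlinarith
      _ ≤ u := by nlinarith
  · linarith [sq_nonneg (_root_.sinc u)]

theorem multipliable_sinc_sq {ι : Type*} {u : ι → ℝ} (hu0 : ∀ i, 0 ≤ u i) (hu : Summable u) :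
    Multipliable fun i => _root_.sinc (u i) ^ 2 := by
  have hsub : Summable fun i => _root_.sinc (u i) ^ 2 - 1 := by
    refine hu.of_norm_bounded fun i => ?_
    rw [Real.norm_eq_abs, abs_sub_comm, abs_of_nonneg (sub_nonneg.2 (sinc_sq_le_one _))]
    exact one_sub_sinc_sq_le_self (hu0 i)
  simpa using Real.multipliable_one_add_of_summable hsub

theorem Multipliable.tprod_le_prod_of_le_one {ι : Type*} {f : ι → ℝ} (hf : Multipliable f)
    (h0 : ∀ i, 0 ≤ f i) (h1 : ∀ i, f i ≤ 1) (s : Finset ι) : ∏' i, f i ≤ ∏ i ∈ s, f i := by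
  classical
  refine le_of_tendsto hf.hasProd ?_
  rw [SummationFilter.unconditional_filter]
  filter_upwards [Filter.eventually_ge_atTop s] with s' hs
  rw [← prod_sdiff hs]
  exact mul_le_of_le_one_left (prod_nonneg fun i _ => h0 i)
    (prod_le_one (fun i _ => h0 i) fun i _ => h1 i)

theorem tprod_sinc_sq_le_prod {ι : Type*} {u : ι → ℝ} (hu0 : ∀ i, 0 ≤ u i) (hu : Summable u)
    (s : Finset ι) : ∏' i, _root_.sinc (u i) ^ 2 ≤ ∏ i ∈ s, _root_.sinc (u i) ^ 2 :=
  (multipliable_sinc_sq hu0 hu).tprod_le_prod_of_le_one (fun _ => sq_nonneg (_root_.sinc _))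
    (fun _ => sinc_sq_le_one _) s

theorem factorial_le_exp_one_mul_sqrt_mul_pow {k : ℕ} (hk : k ≠ 0) :
    (k ! : ℝ) ≤ exp 1 * √k * (k / exp 1) ^ k := by
  obtain ⟨j, rfl⟩ := Nat.exists_eq_add_one_of_ne_zero hk
  have h := Stirling.stirlingSeq'_antitone (Nat.zero_le j)
  simp only [Function.comp_apply, Nat.succ_eq_add_one, zero_add, Stirling.stirlingSeq_one] at h
  rw [Stirling.stirlingSeq, div_le_div_iff₀ (by positivity) (by positivity),
    Real.sqrt_mul zero_le_two] at h
  refine le_of_mul_le_mul_right (h.trans_eq ?_) (by positivity : (0 : ℝ) < √2)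
  ring

theorem factorial_div_pow_sq_le {k : ℕ} {ν : ℝ} (hk : k ≠ 0) (hkν : (k : ℝ) ≤ ν)
    (hνk : ν < k + 1) : ((k ! : ℝ) / ν ^ k) ^ 2 ≤ exp 4 * ν * exp (-(2 * ν)) := by
  have hν0 : 0 < ν := (by positivity : (0 : ℝ) < k).trans_le hkν
  have hfac : (k ! : ℝ) / ν ^ k ≤ exp 1 * √ν * exp (-k) := by
    rw [div_le_iff₀ (by positivity)]
    calc (k ! : ℝ) ≤ exp 1 * √k * (k / exp 1) ^ k := factorial_le_exp_one_mul_sqrt_mul_pow hk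
      _ ≤ exp 1 * √ν * (ν / exp 1) ^ k := by gcongr
      _ = exp 1 * √ν * exp (-k) * ν ^ k := by
        rw [div_pow, ← exp_nat_mul, mul_one, exp_neg]; ring
  calc ((k ! : ℝ) / ν ^ k) ^ 2 ≤ (exp 1 * √ν * exp (-k)) ^ 2 := by gcongr
    _ = exp 2 * ν * exp (-(2 * k)) := by
      rw [mul_pow, mul_pow, sq_sqrt hν0.le, ← exp_nat_mul, ← exp_nat_mul]
      push_cast; ring_nf
    _ ≤ exp 2 * ν * exp (2 - 2 * ν) := by gcongr; linarith
    _ = exp 4 * ν * exp (-(2 * ν)) := by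
      rw [show (2 : ℝ) - 2 * ν = 2 + -(2 * ν) by ring, exp_add, show (4 : ℝ) = 2 + 2 by norm_num,
        exp_add]; ring

theorem prod_sinc_sq_le_factorial_div_pow_sq {u : ℕ → ℝ} {ν : ℝ} (hν : 0 < ν) {k : ℕ}
    (hu : ∀ n < k, ν / (n + 1) ≤ u n) :
    ∏ n ∈ range k, _root_.sinc (u n) ^ 2 ≤ ((k ! : ℝ) / ν ^ k) ^ 2 := by
  calc ∏ n ∈ range k, _root_.sinc (u n) ^ 2 ≤ ∏ n ∈ range k, (((n : ℝ) + 1) / ν) ^ 2 := by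
        refine prod_le_prod (fun n _ => sq_nonneg _) fun n hn => ?_
        have hun := hu n (mem_range.1 hn)
        have hpos : 0 < ν / (n + 1) := by positivity
        calc _root_.sinc (u n) ^ 2 ≤ (u n ^ 2)⁻¹ := sinc_sq_le_inv_sq (hpos.trans_le hun).ne'
          _ ≤ ((ν / (n + 1)) ^ 2)⁻¹ := by gcongr
          _ = (((n : ℝ) + 1) / ν) ^ 2 := by rw [← inv_pow, inv_div]
    _ = ((k ! : ℝ) / ν ^ k) ^ 2 := by
      rw [prod_pow, prod_div_distrib, prod_const, card_range, ← prod_range_add_one_eq_factorial]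
      push_cast; rfl

theorem one_le_log_of_one_le_div_seven_mul_log_sq {x : ℝ} (hL : 1 / √2 ≤ log x)
    (hν : 1 ≤ x / (7 * log x ^ 2)) : 1 ≤ log x := by
  have hL2 : 1 / 2 ≤ log x ^ 2 := by
    have := pow_le_pow_left₀ (by positivity) hL 2
    rwa [div_pow, sq_sqrt zero_le_two, one_pow] at this
  rw [le_div_iff₀ (by positivity), one_mul] at hν
  rw [le_log_iff_exp_le (by linarith)]
  linarith [exp_one_lt_d9]

theorem one_le_two_mul_pi_mul_exp_two_mul_exp_neg {x ν : ℝ} (hx : 1 ≤ x) (hν : ν ≤ 1) :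
    1 ≤ 2 * π * exp 2 * x * exp (-(2 * ν)) := by
  have he : 1 ≤ exp 2 * exp (-(2 * ν)) := by
    rw [← exp_add]; exact one_le_exp (by linarith)
  calc (1 : ℝ) ≤ 2 * π * x * (exp 2 * exp (-(2 * ν))) := by
        nlinarith [mul_le_mul hx he zero_le_one (by linarith), pi_gt_three]
    _ = _ := by ring

theorem exp_four_mul_le_two_mul_pi_mul_exp_two_mul {x : ℝ} (hx : 0 ≤ x) (hL : 1 ≤ log x) :
    exp 4 * (x / (7 * log x ^ 2)) ≤ 2 * π * exp 2 * x := by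
  have he2 : exp 2 ≤ 9 := by
    rw [show (2 : ℝ) = 1 + 1 by norm_num, exp_add]; nlinarith [exp_one_lt_d9, exp_pos 1]
  have hν : x / (7 * log x ^ 2) ≤ x / 7 :=
    div_le_div_of_nonneg_left hx (by norm_num) (by nlinarith)
  have hπ : 9 * (x / 7) ≤ 2 * π * x := by nlinarith [pi_gt_three]
  calc exp 4 * (x / (7 * log x ^ 2)) = exp 2 * (exp 2 * (x / (7 * log x ^ 2))) := by
        rw [← mul_assoc, ← exp_add]; norm_num
    _ ≤ exp 2 * (9 * (x / 7)) := by gcongr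
    _ ≤ exp 2 * (2 * π * x) := by gcongr
    _ = 2 * π * exp 2 * x := by ring

section Weights

variable {a : ℕ → ℝ} (han : ∀ n : ℕ, 2 ≤ n → a n = a 1 / (n * log n ^ 2))
include han

theorem pos_of_eq_div_mul_log_sq (ha1 : 0 < a 1) {n : ℕ} (hn : n ≠ 0) : 0 < a n := by
  rcases (Nat.one_le_iff_ne_zero.2 hn).eq_or_lt with rfl | hn2
  · exact ha1
  rw [han n hn2]
  have : 0 < log n := log_pos (by exact_mod_cast hn2)
  positivity

theorem div_le_mul_of_eq_div_mul_log_sq {t x : ℝ} (hx : 0 < x) (hL : 1 ≤ log x)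
    (ha1 : x / 7 ≤ a 1 * t) {n : ℕ} (hn : n ≠ 0) (hnν : (n : ℝ) ≤ x / (7 * log x ^ 2)) :
    x / (7 * log x ^ 2) / n ≤ a n * t := by
  have hL2 : 1 ≤ log x ^ 2 := by nlinarith
  have hν : x / (7 * log x ^ 2) = x / 7 / log x ^ 2 := by rw [div_div]
  rcases (Nat.one_le_iff_ne_zero.2 hn).eq_or_lt with rfl | hn2
  · rw [Nat.cast_one, div_one, hν]
    exact (div_le_self (by positivity) hL2).trans ha1
  have hn2' : (2 : ℝ) ≤ n := by exact_mod_cast hn2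
  have hlogn : 0 < log n := log_pos (by linarith)
  have hlogn_le : log n ≤ log x :=
    log_le_log (by linarith) (hnν.trans (div_le_self hx.le (by nlinarith)))
  rw [han n hn2, div_mul_eq_mul_div, hν, div_div, mul_comm (log x ^ 2)]
  gcongr
  exact (by positivity : (0 : ℝ) ≤ x / 7).trans ha1

theorem prod_range_floor_sinc_sq_le {t x : ℝ} (hx : 0 < x) (hL : 1 ≤ log x)
    (ha1 : x / 7 ≤ a 1 * t) (hν : 1 ≤ x / (7 * log x ^ 2)) :
    ∏ n ∈ range ⌊x / (7 * log x ^ 2)⌋₊, _root_.sinc (a (n + 1) * t) ^ 2 ≤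
      exp 4 * (x / (7 * log x ^ 2)) * exp (-(2 * (x / (7 * log x ^ 2)))) := by
  set ν := x / (7 * log x ^ 2)
  have hν0 : 0 < ν := one_pos.trans_le hν
  refine (prod_sinc_sq_le_factorial_div_pow_sq hν0 fun n hn => ?_).trans
    (factorial_div_pow_sq_le (Nat.floor_pos.2 hν).ne' (Nat.floor_le hν0.le)
      (Nat.lt_floor_add_one ν))
  have hnν : ((n + 1 : ℕ) : ℝ) ≤ ν := (Nat.le_floor_iff hν0.le).1 hn
  simpa using div_le_mul_of_eq_div_mul_log_sq han hx hL ha1 n.succ_ne_zero hnν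

theorem exists_prod_sinc_sq_le {t x : ℝ} (hx : exp (1 / √2) ≤ x) (ha1 : x / 7 ≤ a 1 * t) :
    ∃ s : Finset ℕ, ∏ n ∈ s, _root_.sinc (a (n + 1) * t) ^ 2 ≤
      2 * π * exp 2 * x * exp (-(2 * (x / (7 * log x ^ 2)))) := by
  have hx0 : 0 < x := (exp_pos _).trans_le hx
  rcases lt_or_ge (x / (7 * log x ^ 2)) 1 with hν | hν
  · refine ⟨∅, ?_⟩
    simpa using
      one_le_two_mul_pi_mul_exp_two_mul_exp_neg ((one_le_exp (by positivity)).trans hx) hν.le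
  · have hL := one_le_log_of_one_le_div_seven_mul_log_sq ((le_log_iff_exp_le hx0).2 hx) hν
    refine ⟨range ⌊x / (7 * log x ^ 2)⌋₊,
      (prod_range_floor_sinc_sq_le han hx0 hL ha1 hν).trans ?_⟩
    gcongr ?_ * _
    exact exp_four_mul_le_two_mul_pi_mul_exp_two_mul hx0.le hL

end Weights

theorem weight_decay_bound_general (γ : ℝ) (hγ : 0 < γ)
    (a : ℕ → ℝ) (ha1l : γ / 7 < a 1)
    (han : ∀ n : ℕ, 2 ≤ n → a n = a 1 / (n * (Real.log n) ^ 2))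
    (hsummable : Summable (fun n : ℕ => a (n + 1)))
    (c : ℝ) (hcl : γ / (2 * Real.pi) < c) (hcu : c < γ / Real.pi)
    (w : ℝ → ℝ) (hw : ∀ t, w t = c * ∏' n : ℕ, (_root_.sinc (a (n + 1) * t)) ^ 2)
    (t : ℝ) (ht : Real.exp (1 / Real.sqrt 2) / γ ≤ t) :
    0 ≤ w t ∧
      w t ≤ 2 * (Real.exp 1 * γ) ^ 2 * t *
        Real.exp (-((2 / 7) * (γ * t) / (Real.log (γ * t)) ^ 2)) := by
  have ht0 : 0 < t := (by positivity : 0 < exp (1 / √2) / γ).trans_le ht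
  have hc0 : 0 < c := (by positivity : 0 < γ / (2 * π)).trans hcl
  have hx1 : exp (1 / √2) ≤ γ * t := by rwa [div_le_iff₀ hγ, mul_comm] at ht
  have ha1 : γ * t / 7 ≤ a 1 * t := by
    rw [mul_div_right_comm]; exact mul_le_mul_of_nonneg_right ha1l.le ht0.le
  have hnonneg (n : ℕ) : 0 ≤ a (n + 1) * t := mul_nonneg (pos_of_eq_div_mul_log_sq han
    ((by positivity : 0 < γ / 7).trans ha1l) n.succ_ne_zero).le ht0.le
  have hprod_nonneg : 0 ≤ ∏' n, _root_.sinc (a (n + 1) * t) ^ 2 :=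
    tprod_nonneg fun n => sq_nonneg (_root_.sinc _)
  refine ⟨hw t ▸ mul_nonneg hc0.le hprod_nonneg, ?_⟩
  obtain ⟨s, hs⟩ := exists_prod_sinc_sq_le han hx1 ha1
  calc w t ≤ γ / π * ∏ n ∈ s, _root_.sinc (a (n + 1) * t) ^ 2 :=
        hw t ▸ mul_le_mul hcu.le (tprod_sinc_sq_le_prod hnonneg (hsummable.mul_right t) s)
          hprod_nonneg (by positivity)
    _ ≤ γ / π * (2 * π * exp 2 * (γ * t) * exp (-(2 * (γ * t / (7 * log (γ * t) ^ 2))))) := by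
        gcongr
    _ = _ := by
        rw [show exp 2 = exp 1 ^ 2 by rw [← exp_nat_mul]; norm_num]
        field_simp

/-- With `w_γ` the normalized infinite product (`∫ w_γ = 1`, `γ/(2π) < c_γ < γ/π`,
`γ/7 < a_1 < γ/2`), for every `t ≥ e^{1/√2}/γ` one has
`0 ≤ w_γ(t) ≤ 2(eγ)² t exp(−(2/7) γt/(ln(γt))²)`. -/
theorem weight_decay_bound (γ : ℝ) (hγ : 0 < γ)
    (a : ℕ → ℝ) (ha1l : γ / 7 < a 1) (ha1u : a 1 < γ / 2)
    (han : ∀ n : ℕ, 2 ≤ n → a n = a 1 / (n * (Real.log n) ^ 2))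
    (hsummable : Summable (fun n : ℕ => a (n + 1)))
    (hsum : ∑' n : ℕ, a (n + 1) = γ / 2)
    (c : ℝ) (hcl : γ / (2 * Real.pi) < c) (hcu : c < γ / Real.pi)
    (w : ℝ → ℝ) (hw : ∀ t, w t = c * ∏' n : ℕ, (_root_.sinc (a (n + 1) * t)) ^ 2)
    (hnormalized : ∫ t, w t = 1)
    (t : ℝ) (ht : Real.exp (1 / Real.sqrt 2) / γ ≤ t) :
    0 ≤ w t ∧
      w t ≤ 2 * (Real.exp 1 * γ) ^ 2 * t *
        Real.exp (-((2 / 7) * (γ * t) / (Real.log (γ * t)) ^ 2)) :=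
  weight_decay_bound_general γ hγ a ha1l han hsummable c hcl hcu w hw t ht
end

section
/- Let H₁, H₂ be Hilbert spaces, ε ≥ 0, and A ∈ B(H₁ ⊗ H₂) with ‖[A, 1 ⊗ B]‖ ≤ ε‖B‖ for all B ∈ B(H₂). For a unit vector ξ ∈ H₂ define A_ξ ∈ B(H₁) by ⟨φ, A_ξ ψ⟩ = ⟨φ⊗ξ, A(ψ⊗ξ)⟩. Then for any two unit vectors ξ, η ∈ H₂, ‖A_ξ − A_η‖ ≤ ε. -/
/-!
With `V_ξ φ = φ ⊗ ξ`, the slice is the compression `A_ξ = V_ξ† A V_ξ`, and `V_ξ† V_ξ = 1` for a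
unit vector `ξ`. The ampliation of `B = |η⟩⟨ξ|` is `1 ⊗ B = V_η V_ξ†`, so
`V_η† (A (1 ⊗ B) - (1 ⊗ B) A) V_ξ = V_η† A V_η - V_ξ† A V_ξ = A_η - A_ξ`.
Since `V_ξ, V_η` are contractions and `‖B‖ = 1`, the commutator bound gives `‖A_η - A_ξ‖ ≤ ε`.
-/

open ContinuousLinearMap

namespace ContinuousLinearMap

variable {𝕜 E F : Type*} [RCLike 𝕜]
  [NormedAddCommGroup E] [InnerProductSpace 𝕜 E] [CompleteSpace E]
  [NormedAddCommGroup F] [InnerProductSpace 𝕜 F] [CompleteSpace F]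

theorem eq_adjoint_comp_comp_of_inner_eq (V : E →L[𝕜] F) (A : F →L[𝕜] F) (S : E →L[𝕜] E)
    (h : ∀ φ ψ, inner 𝕜 φ (S ψ) = inner 𝕜 (V φ) (A (V ψ))) :
    S = adjoint V ∘L A ∘L V := by
  ext ψ
  refine ext_inner_left 𝕜 fun φ => ?_
  rw [comp_apply, comp_apply, adjoint_inner_right, h]

theorem norm_le_one_of_adjoint_comp_self_eq_id {V : E →L[𝕜] F}
    (hV : adjoint V ∘L V = ContinuousLinearMap.id 𝕜 E) : ‖V‖ ≤ 1 := by
  have h : ‖V‖ * ‖V‖ ≤ 1 := by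
    rw [← norm_adjoint_comp_self, hV]
    exact norm_id_le
  nlinarith [norm_nonneg V]

theorem norm_adjoint_comp_comp_le {V W : E →L[𝕜] F} (hV : ‖V‖ ≤ 1) (hW : ‖W‖ ≤ 1)
    (C : F →L[𝕜] F) : ‖adjoint V ∘L C ∘L W‖ ≤ ‖C‖ :=
  calc ‖adjoint V ∘L C ∘L W‖ ≤ ‖adjoint V‖ * (‖C‖ * ‖W‖) :=
        (opNorm_comp_le _ _).trans (by gcongr; exact opNorm_comp_le _ _)
    _ ≤ 1 * (‖C‖ * 1) := by
        rw [LinearIsometryEquiv.norm_map]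
        gcongr
    _ = ‖C‖ := by ring

end ContinuousLinearMap

section HilbertTensor

variable {𝕜 H₁ H₂ H : Type*} [RCLike 𝕜]
  [NormedAddCommGroup H₁] [InnerProductSpace 𝕜 H₁] [CompleteSpace H₁]
  [NormedAddCommGroup H₂] [InnerProductSpace 𝕜 H₂]
  [NormedAddCommGroup H] [InnerProductSpace 𝕜 H] [CompleteSpace H]
  {tmul : H₁ →L[𝕜] H₂ →L[𝕜] H}

theorem adjoint_flip_apply_tmul
    (htmul : ∀ x x' y y', inner 𝕜 (tmul x y) (tmul x' y') = inner 𝕜 x x' * inner 𝕜 y y')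
    (v : H₂) (x : H₁) (y : H₂) : adjoint (tmul.flip v) (tmul x y) = inner 𝕜 v y • x := by
  refine ext_inner_left 𝕜 fun w => ?_
  rw [adjoint_inner_right, flip_apply, htmul, inner_smul_right, mul_comm]

theorem adjoint_flip_comp_flip_self
    (htmul : ∀ x x' y y', inner 𝕜 (tmul x y) (tmul x' y') = inner 𝕜 x x' * inner 𝕜 y y')
    {v : H₂} (hv : ‖v‖ = 1) : adjoint (tmul.flip v) ∘L tmul.flip v = ContinuousLinearMap.id 𝕜 H₁ := by
  ext x
  rw [comp_apply, flip_apply, adjoint_flip_apply_tmul htmul, inner_self_eq_one_of_norm_eq_one hv,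
    one_smul, id_apply]

theorem flip_comp_adjoint_flip_apply_tmul
    (htmul : ∀ x x' y y', inner 𝕜 (tmul x y) (tmul x' y') = inner 𝕜 x x' * inner 𝕜 y y')
    (v w : H₂) (x : H₁) (y : H₂) :
    (tmul.flip w ∘L adjoint (tmul.flip v)) (tmul x y) = tmul x ((innerSL 𝕜 v).smulRight w y) := by
  rw [comp_apply, adjoint_flip_apply_tmul htmul, map_smul, flip_apply, smulRight_apply,
    innerSL_apply_apply, map_smul]

end HilbertTensor

theorem slice_operators_close_general
    {H₁ H₂ H : Type*}
    [NormedAddCommGroup H₁] [InnerProductSpace ℂ H₁] [CompleteSpace H₁]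
    [NormedAddCommGroup H₂] [InnerProductSpace ℂ H₂]
    [NormedAddCommGroup H] [InnerProductSpace ℂ H] [CompleteSpace H]
    (tmul : H₁ →L[ℂ] H₂ →L[ℂ] H)
    (htmul : ∀ (x x' : H₁) (y y' : H₂),
      (inner ℂ (tmul x y) (tmul x' y') : ℂ) = (inner ℂ x x' : ℂ) * (inner ℂ y y' : ℂ))
    (ε : ℝ)
    (A : H →L[ℂ] H)
    (hcomm : ∀ (B : H₂ →L[ℂ] H₂) (Bt : H →L[ℂ] H),
      (∀ x y, Bt (tmul x y) = tmul x (B y)) →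
      ‖A ∘L Bt - Bt ∘L A‖ ≤ ε * ‖B‖)
    (ξ η : H₂) (hξ : ‖ξ‖ = 1) (hη : ‖η‖ = 1)
    (Aξ Aη : H₁ →L[ℂ] H₁)
    (hAξ : ∀ φ ψ : H₁, (inner ℂ φ (Aξ ψ) : ℂ) = (inner ℂ (tmul φ ξ) (A (tmul ψ ξ)) : ℂ))
    (hAη : ∀ φ ψ : H₁, (inner ℂ φ (Aη ψ) : ℂ) = (inner ℂ (tmul φ η) (A (tmul ψ η)) : ℂ)) :
    ‖Aξ - Aη‖ ≤ ε := by
  set Vξ := tmul.flip ξ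
  set Vη := tmul.flip η
  have hVξ : adjoint Vξ ∘L Vξ = ContinuousLinearMap.id ℂ H₁ := adjoint_flip_comp_flip_self htmul hξ
  have hVη : adjoint Vη ∘L Vη = ContinuousLinearMap.id ℂ H₁ := adjoint_flip_comp_flip_self htmul hη
  have hcomm_rankOne : ‖A ∘L (Vη ∘L adjoint Vξ) - (Vη ∘L adjoint Vξ) ∘L A‖ ≤ ε := by
    simpa [norm_smulRight_apply, hξ, hη] using
      hcomm _ _ (flip_comp_adjoint_flip_apply_tmul htmul ξ η)
  have hcompression : Aη - Aξ =
      adjoint Vη ∘L (A ∘L (Vη ∘L adjoint Vξ) - (Vη ∘L adjoint Vξ) ∘L A) ∘L Vξ := by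
    rw [eq_adjoint_comp_comp_of_inner_eq Vξ A Aξ hAξ,
      eq_adjoint_comp_comp_of_inner_eq Vη A Aη hAη]
    simp only [comp_sub, sub_comp, comp_assoc, hVξ, ← comp_assoc (adjoint Vη) Vη, hVη,
      comp_id, id_comp]
  calc ‖Aξ - Aη‖ = ‖Aη - Aξ‖ := norm_sub_rev _ _
    _ ≤ ε := hcompression ▸ (norm_adjoint_comp_comp_le
          (norm_le_one_of_adjoint_comp_self_eq_id hVη)
          (norm_le_one_of_adjoint_comp_self_eq_id hVξ) _).trans hcomm_rankOne

/-- Let `H₁, H₂` be Hilbert spaces realized in a Hilbert tensor product `H`, `ε ≥ 0`, and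
`A ∈ B(H₁⊗H₂)` with `‖[A, 1⊗B]‖ ≤ ε‖B‖` for all `B ∈ B(H₂)`.  For a unit vector `ξ ∈ H₂`
let `A_ξ ∈ B(H₁)` be the slice `⟨φ, A_ξ ψ⟩ = ⟨φ⊗ξ, A(ψ⊗ξ)⟩`.  Then for any two unit
vectors `ξ, η ∈ H₂`, `‖A_ξ − A_η‖ ≤ ε`. -/
theorem slice_operators_close
    {H₁ H₂ H : Type*}
    [NormedAddCommGroup H₁] [InnerProductSpace ℂ H₁] [CompleteSpace H₁]
    [NormedAddCommGroup H₂] [InnerProductSpace ℂ H₂] [CompleteSpace H₂]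
    [NormedAddCommGroup H] [InnerProductSpace ℂ H] [CompleteSpace H]
    (tmul : H₁ →L[ℂ] H₂ →L[ℂ] H)
    (htmul : ∀ (x x' : H₁) (y y' : H₂),
      (inner ℂ (tmul x y) (tmul x' y') : ℂ) = (inner ℂ x x' : ℂ) * (inner ℂ y y' : ℂ))
    (hdense : Dense (Submodule.span ℂ {z : H | ∃ x y, z = tmul x y} : Set H))
    (ε : ℝ) (hε : 0 ≤ ε)
    (A : H →L[ℂ] H)
    (hcomm : ∀ (B : H₂ →L[ℂ] H₂) (Bt : H →L[ℂ] H),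
      (∀ x y, Bt (tmul x y) = tmul x (B y)) →
      ‖A ∘L Bt - Bt ∘L A‖ ≤ ε * ‖B‖)
    (ξ η : H₂) (hξ : ‖ξ‖ = 1) (hη : ‖η‖ = 1)
    (Aξ Aη : H₁ →L[ℂ] H₁)
    (hAξ : ∀ φ ψ : H₁, (inner ℂ φ (Aξ ψ) : ℂ) = (inner ℂ (tmul φ ξ) (A (tmul ψ ξ)) : ℂ))
    (hAη : ∀ φ ψ : H₁, (inner ℂ φ (Aη ψ) : ℂ) = (inner ℂ (tmul φ η) (A (tmul ψ η)) : ℂ)) :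
    ‖Aξ - Aη‖ ≤ ε :=
  slice_operators_close_general tmul htmul ε A hcomm ξ η hξ hη Aξ Aη hAξ hAη
end
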